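/- For real numbers c ≥ 0, d, and T ≥ 3, the quantities min(1/(c²+d²), 1/(c²+(Tc+d)²)) and min(1/(T²c²), 1/d²) agree up to absolute multiplicative constants; i.e., there exist absolute constants C₁, C₂ > 0 with C₁·min(1/(T²c²), 1/d²) ≤ min(1/(c²+d²), 1/(c²+(Tc+d)²)) ≤ C₂·min(1/(T²c²), 1/d²), whenever (c,d) ≠ (0,0). -/
import Mathlib


open ENNReal

lemma stmt4_real1 (c d T : ℝ) (hc : 0 ≤ c) (hT : 3 ≤ T) :
    max (c ^ 2 + d ^ 2) (c ^ 2 + (T * c + d) ^ 2) ≤ 6 * max (T ^ 2 * c ^ 2) (d ^ 2) := by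
  have h1 : T ^ 2 * c ^ 2 ≤ max (T ^ 2 * c ^ 2) (d ^ 2) := le_max_left _ _
  have h2 : d ^ 2 ≤ max (T ^ 2 * c ^ 2) (d ^ 2) := le_max_right _ _
  have hcc : c ^ 2 ≤ T ^ 2 * c ^ 2 :=
    le_mul_of_one_le_left (sq_nonneg c) (by nlinarith)
  apply max_le
  · nlinarith [sq_nonneg d]
  · nlinarith [sq_nonneg (T * c - d), sq_nonneg d]

lemma stmt4_real2 (c d T : ℝ) (hc : 0 ≤ c) (hT : 3 ≤ T) :
    max (T ^ 2 * c ^ 2) (d ^ 2) ≤ 4 * max (c ^ 2 + d ^ 2) (c ^ 2 + (T * c + d) ^ 2) := by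
  have ha := abs_nonneg d
  have hb := neg_abs_le d
  have hc' := le_abs_self d
  have hTc : 0 ≤ T * c := by positivity
  rcases le_total (2 * |d|) (T * c) with h | h
  · have h5 : T * c ≤ 2 * (T * c + d) := by linarith
    have h4 : T * c * (T * c) ≤ 2 * (T * c + d) * (2 * (T * c + d)) :=
      mul_self_le_mul_self hTc h5
    have h6 : 2 * |d| * (2 * |d|) ≤ T * c * (T * c) :=
      mul_self_le_mul_self (by positivity) h
    have key : max (T ^ 2 * c ^ 2) (d ^ 2) ≤ 4 * (c ^ 2 + (T * c + d) ^ 2) := by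
      apply max_le
      · nlinarith [sq_nonneg c]
      · nlinarith [sq_nonneg c, sq_abs d]
    exact key.trans (by nlinarith [le_max_right (c ^ 2 + d ^ 2) (c ^ 2 + (T * c + d) ^ 2), sq_nonneg c, sq_nonneg (T * c + d), sq_nonneg d])
  · have h4 : T * c * (T * c) ≤ 2 * |d| * (2 * |d|) := mul_self_le_mul_self hTc h
    have key : max (T ^ 2 * c ^ 2) (d ^ 2) ≤ 4 * (c ^ 2 + d ^ 2) := by
      apply max_le
      · nlinarith [sq_nonneg c, sq_abs d]
      · nlinarith [sq_nonneg c]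
    exact key.trans (by nlinarith [le_max_left (c ^ 2 + d ^ 2) (c ^ 2 + (T * c + d) ^ 2), sq_nonneg c, sq_nonneg (T * c + d), sq_nonneg d])

lemma stmt4_min_inv (x y : ℝ) :
    min (1 / ENNReal.ofReal x) (1 / ENNReal.ofReal y) = (ENNReal.ofReal (max x y))⁻¹ := by
  rcases le_total x y with h | h
  · rw [max_eq_right h, one_div, one_div,
      min_eq_right (ENNReal.inv_le_inv.2 (ENNReal.ofReal_le_ofReal h))]
  · rw [max_eq_left h, one_div, one_div,
      min_eq_left (ENNReal.inv_le_inv.2 (ENNReal.ofReal_le_ofReal h))]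

theorem stmt_4 :
    ∃ C₁ C₂ : ℝ≥0∞, 0 < C₁ ∧ C₂ < ⊤ ∧
      ∀ c d T : ℝ, 0 ≤ c → 3 ≤ T → ¬(c = 0 ∧ d = 0) →
        C₁ * min (1 / ENNReal.ofReal (T ^ 2 * c ^ 2)) (1 / ENNReal.ofReal (d ^ 2))
          ≤ min (1 / ENNReal.ofReal (c ^ 2 + d ^ 2))
              (1 / ENNReal.ofReal (c ^ 2 + (T * c + d) ^ 2)) ∧
        min (1 / ENNReal.ofReal (c ^ 2 + d ^ 2))
            (1 / ENNReal.ofReal (c ^ 2 + (T * c + d) ^ 2))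
          ≤ C₂ * min (1 / ENNReal.ofReal (T ^ 2 * c ^ 2)) (1 / ENNReal.ofReal (d ^ 2)) := by
  refine ⟨(6 : ℝ≥0∞)⁻¹, 4, by simp, by simp, ?_⟩
  intro c d T hc hT _
  rw [stmt4_min_inv, stmt4_min_inv]
  set M : ℝ := max (T ^ 2 * c ^ 2) (d ^ 2) with hM
  set N : ℝ := max (c ^ 2 + d ^ 2) (c ^ 2 + (T * c + d) ^ 2) with hN
  have hM0 : 0 ≤ M := le_trans (sq_nonneg d) (le_max_right _ _)
  have hN0 : 0 ≤ N := le_trans (by positivity) (le_max_left (c ^ 2 + d ^ 2) _)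
  have h1 : ENNReal.ofReal N ≤ 6 * ENNReal.ofReal M := by
    calc ENNReal.ofReal N ≤ ENNReal.ofReal (6 * M) :=
          ENNReal.ofReal_le_ofReal (stmt4_real1 c d T hc hT)
      _ = 6 * ENNReal.ofReal M := by
          rw [ENNReal.ofReal_mul (by norm_num)]; norm_num
  have h2 : ENNReal.ofReal M ≤ 4 * ENNReal.ofReal N := by
    calc ENNReal.ofReal M ≤ ENNReal.ofReal (4 * N) :=
          ENNReal.ofReal_le_ofReal (stmt4_real2 c d T hc hT)
      _ = 4 * ENNReal.ofReal N := by
          rw [ENNReal.ofReal_mul (by norm_num)]; norm_num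
  constructor
  · have := ENNReal.inv_le_inv.2 h1
    rwa [ENNReal.mul_inv (by norm_num) (by norm_num)] at this
  · have := ENNReal.inv_le_inv.2 h2
    rw [ENNReal.mul_inv (by norm_num) (by norm_num)] at this
    calc (ENNReal.ofReal N)⁻¹ = 4 * (4⁻¹ * (ENNReal.ofReal N)⁻¹) := by
          rw [← mul_assoc, ENNReal.mul_inv_cancel (by norm_num) (by norm_num), one_mul]
      _ ≤ 4 * (ENNReal.ofReal M)⁻¹ := mul_le_mul_right this _
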